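/- arXiv:1309.6789 — 9 statements merged into one kernel-verified Lean document; each statement's English description precedes it below -/
import Mathlib

section
/- Let m > 1 and a > 0 be real. Define ψ_a : [0,∞) → ℝ by ψ_a(x) = (a^m − x^m)/(a − x) for x ≠ a and ψ_a(a) = m·a^{m−1}. Then ψ_a is continuous and strictly increasing on [0,∞), and its restriction to [0,a] is a bijection from [0,a] onto the interval [a^{m−1}, m·a^{m−1}]. -/
/-- The Rankine–Hugoniot jump function `ψ_a(x) = (a^m - x^m)/(a - x)` for `x ≠ a`,
extended by its limiting value `m·a^{m-1}` at `x = a`; powers are real powers. -/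
noncomputable def psi (m a x : ℝ) : ℝ :=
  if x = a then m * a ^ (m - 1) else (a ^ m - x ^ m) / (a - x)

/-- For `m > 1` and `a > 0`, the function `ψ_a` is continuous and strictly
increasing on `[0,∞)`, and its restriction to `[0,a]` is a bijection onto
`[a^{m-1}, m·a^{m-1}]`. -/
theorem stmt3 (m a : ℝ) (hm : 1 < m) (ha : 0 < a) :
    ContinuousOn (psi m a) (Set.Ici 0) ∧
    StrictMonoOn (psi m a) (Set.Ici 0) ∧
    Set.BijOn (psi m a) (Set.Icc 0 a) (Set.Icc (a ^ (m - 1)) (m * a ^ (m - 1))) := by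
  have hm0 : (0:ℝ) < m := one_pos.trans hm
  set f : ℝ → ℝ := fun t => t ^ m with hf
  have hconv : StrictConvexOn ℝ (Set.Ici 0) f := strictConvexOn_rpow hm
  have hderiv : HasDerivAt f (m * a ^ (m - 1)) a :=
    Real.hasDerivAt_rpow_const (Or.inl ha.ne')
  have haI : a ∈ Set.Ici (0:ℝ) := Set.mem_Ici.mpr ha.le
  have hpsislope : ∀ x : ℝ, x ≠ a → psi m a x = slope f a x := by
    intro x hx
    have h1 : a - x ≠ 0 := sub_ne_zero.mpr (Ne.symm hx)
    have h2 : x - a ≠ 0 := sub_ne_zero.mpr hx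
    simp only [psi, if_neg hx, slope_def_field, hf]
    rw [div_eq_div_iff h1 h2]; ring
  have hpsia : psi m a a = m * a ^ (m - 1) := if_pos rfl
  -- strict monotonicity
  have hmono : StrictMonoOn (psi m a) (Set.Ici 0) := by
    intro x hx y hy hxy
    rcases eq_or_ne x a with rfl | hxa
    · rw [hpsia, hpsislope y (ne_of_gt hxy)]
      exact hconv.lt_slope_of_hasDerivAt haI hy hxy hderiv
    · rcases eq_or_ne y a with rfl | hya
      · rw [hpsia, hpsislope x hxa, slope_comm]
        exact hconv.slope_lt_of_hasDerivAt hx haI hxy hderiv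
      · rw [hpsislope x hxa, hpsislope y hya, slope_def_field, slope_def_field]
        exact hconv.secant_strict_mono haI hx hy hxa hya hxy
  -- continuity
  have hcont : ContinuousOn (psi m a) (Set.Ici 0) := by
    intro x hx
    rcases eq_or_ne x a with rfl | hxa
    · have h1 := (hasDerivAt_iff_tendsto_slope.mp hderiv).congr' (by
        filter_upwards [self_mem_nhdsWithin] with z hz
        exact (hpsislope z hz).symm)
      rw [← hpsia] at h1
      exact (continuousWithinAt_compl_self.mp h1).continuousWithinAt
    · have hg : ContinuousAt (fun z : ℝ => (a ^ m - z ^ m) / (a - z)) x := by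
        refine ContinuousAt.div (continuousAt_const.sub ?_)
          (continuousAt_const.sub continuousAt_id) (sub_ne_zero.mpr (Ne.symm hxa))
        exact Real.continuousAt_rpow_const x m (Or.inr hm0.le)
      have heq : (fun z : ℝ => (a ^ m - z ^ m) / (a - z)) =ᶠ[nhds x] psi m a := by
        filter_upwards [isOpen_ne.mem_nhds hxa] with z hz
        simp only [psi, if_neg hz]
      exact (hg.congr heq).continuousWithinAt
  -- endpoint values
  have h0 : psi m a 0 = a ^ (m - 1) := by
    simp only [psi, if_neg (ne_of_lt ha), Real.zero_rpow hm0.ne', sub_zero,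
      Real.rpow_sub ha, Real.rpow_one]
  refine ⟨hcont, hmono, ?_, ?_, ?_⟩
  · intro x hxm
    have hx0 : (0:ℝ) ≤ x := hxm.1
    have hxI : x ∈ Set.Ici (0:ℝ) := hx0
    constructor
    · rw [← h0]
      exact hmono.monotoneOn (Set.mem_Ici.mpr le_rfl) hxI hx0
    · rw [← hpsia]
      exact hmono.monotoneOn hxI haI hxm.2
  · exact (hmono.injOn).mono (Set.Icc_subset_Ici_self)
  · have := intermediate_value_Icc ha.le (hcont.mono Set.Icc_subset_Ici_self)
    rwa [h0, hpsia] at this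
end

section
/- Let m > 1, σ > 0, c > 0 and a > 0 be real numbers. There exists b ∈ [0,a] with ψ_a(b) = σ/c if and only if a^{m−1} ≤ σ/c ≤ m·a^{m−1}; and when such b exists it is unique. -/
/-!
`ψ_a` is the difference quotient `dslope (· ^ m) a` of the strictly convex function `x ↦ x ^ m`
on `[0, ∞)`. Slopes of a strictly convex function through a fixed point increase strictly, so
`ψ_a` is a continuous strictly increasing function on `[0, a]`, running from
`ψ_a(0) = a^{m-1}` to `ψ_a(a) = m·a^{m-1}`; existence is the intermediate value theorem and
uniqueness is injectivity.
-/

open Set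

theorem StrictConvexOn.strictMonoOn_dslope {S : Set ℝ} {f : ℝ → ℝ} {a : ℝ}
    (hf : StrictConvexOn ℝ S f) (ha : a ∈ S) (hfa : DifferentiableAt ℝ f a) :
    StrictMonoOn (dslope f a) S := by
  intro x hx y hy hxy
  rcases eq_or_ne x a with rfl | hxa
  · rw [dslope_same, dslope_of_ne f hxy.ne']
    exact hf.deriv_lt_slope hx hy hxy hfa
  rcases eq_or_ne y a with rfl | hya
  · rw [dslope_same, dslope_of_ne f hxa, slope_comm]
    exact hf.slope_lt_deriv hx hy hxy hfa
  rw [dslope_of_ne f hxa, dslope_of_ne f hya, slope_def_field, slope_def_field]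
  exact hf.secant_strict_mono ha hx hy hxa hya hxy

theorem Continuous.dslope {f : ℝ → ℝ} {a : ℝ} (hf : Continuous f)
    (hfa : DifferentiableAt ℝ f a) : Continuous (dslope f a) :=
  continuousOn_univ.1 <| (continuousOn_dslope Filter.univ_mem).2 ⟨hf.continuousOn, hfa⟩

theorem psi_eq_dslope {m a : ℝ} (h : a ≠ 0 ∨ 1 ≤ m) :
    psi m a = dslope (fun x => x ^ m) a := by
  funext x
  rcases eq_or_ne x a with rfl | hxa
  · rw [dslope_same, (Real.hasDerivAt_rpow_const h).deriv, psi, if_pos rfl]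
  · rw [dslope_of_ne _ hxa, slope_def_field, psi, if_neg hxa, ← neg_div_neg_eq, neg_sub, neg_sub]

theorem psi_self (m a : ℝ) : psi m a a = m * a ^ (m - 1) := if_pos rfl

theorem psi_zero {m a : ℝ} (hm : m ≠ 0) (ha : 0 < a) : psi m a 0 = a ^ (m - 1) := by
  rw [psi, if_neg ha.ne, Real.zero_rpow hm, sub_zero, sub_zero, Real.rpow_sub_one ha.ne']

theorem strictMonoOn_psi {m a : ℝ} (hm : 1 < m) (ha : 0 ≤ a) :
    StrictMonoOn (psi m a) (Ici 0) := by
  rw [psi_eq_dslope (Or.inr hm.le)]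
  exact (strictConvexOn_rpow hm).strictMonoOn_dslope ha
    (Real.hasDerivAt_rpow_const (Or.inr hm.le)).differentiableAt

theorem continuous_psi {m : ℝ} (a : ℝ) (hm : 1 ≤ m) : Continuous (psi m a) := by
  rw [psi_eq_dslope (Or.inr hm)]
  exact (Real.continuous_rpow_const (by linarith)).dslope
    (Real.hasDerivAt_rpow_const (Or.inr hm)).differentiableAt

theorem stmt5_general (m σ c a : ℝ) (hm : 1 < m) (ha : 0 < a) :
    ((∃ b ∈ Set.Icc (0:ℝ) a, psi m a b = σ / c) ↔
      a ^ (m - 1) ≤ σ / c ∧ σ / c ≤ m * a ^ (m - 1)) ∧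
    (∀ b₁ ∈ Set.Icc (0:ℝ) a, ∀ b₂ ∈ Set.Icc (0:ℝ) a,
      psi m a b₁ = σ / c → psi m a b₂ = σ / c → b₁ = b₂) := by
  have hmono : StrictMonoOn (psi m a) (Icc 0 a) :=
    (strictMonoOn_psi hm ha.le).mono Icc_subset_Ici_self
  have h0 : (0 : ℝ) ∈ Icc 0 a := left_mem_Icc.2 ha.le
  have ha' : a ∈ Icc 0 a := right_mem_Icc.2 ha.le
  rw [← psi_self m a, ← psi_zero (by linarith) ha]
  refine ⟨⟨?_, fun hbounds => ?_⟩,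
    fun b₁ hb₁ b₂ hb₂ h₁ h₂ => hmono.injOn hb₁ hb₂ (h₁.trans h₂.symm)⟩
  · rintro ⟨b, hb, hψb⟩
    rw [← hψb]
    exact ⟨hmono.monotoneOn h0 hb hb.1, hmono.monotoneOn hb ha' hb.2⟩
  · exact intermediate_value_Icc ha.le (continuous_psi a hm.le).continuousOn hbounds

/-- For `m > 1`, `σ > 0`, `c > 0`, `a > 0`: there exists `b ∈ [0,a]` with
`ψ_a(b) = σ/c` if and only if `a^{m-1} ≤ σ/c ≤ m·a^{m-1}`, and such a `b` is
unique when it exists. -/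
theorem stmt5 (m σ c a : ℝ) (hm : 1 < m) (hσ : 0 < σ) (hc : 0 < c) (ha : 0 < a) :
    ((∃ b ∈ Set.Icc (0:ℝ) a, psi m a b = σ / c) ↔
      a ^ (m - 1) ≤ σ / c ∧ σ / c ≤ m * a ^ (m - 1)) ∧
    (∀ b₁ ∈ Set.Icc (0:ℝ) a, ∀ b₂ ∈ Set.Icc (0:ℝ) a,
      psi m a b₁ = σ / c → psi m a b₂ = σ / c → b₁ = b₂) :=
  stmt5_general m σ c a hm ha
end

section
/- Let m > 1 and c > 0 be real, and let I ⊆ (0,∞) be a set of speeds. Suppose u⁺ : I → (0,∞) is strictly antitone (strictly decreasing) and u⁻ : I → [0,∞) satisfies, for every σ ∈ I, u⁻(σ) ≤ u⁺(σ) and ψ_{u⁺(σ)}(u⁻(σ)) = σ/c. Then u⁻ is strictly monotone (strictly increasing) on I. -/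
/-- The derivative `t ↦ m·t^(m-1)` of `t ↦ t^m` is strictly monotone on `[0,∞)`. -/
lemma deriv_mono' {m x y : ℝ} (hm : 1 < m) (hx : 0 ≤ x) (hxy : x < y) :
    m * x ^ (m - 1) < m * y ^ (m - 1) :=
  mul_lt_mul_of_pos_left (Real.rpow_lt_rpow hx hxy (by linarith)) (by linarith)

/-- Mean value representation of the slope of `t ↦ t^m`. -/
lemma slope_rep' {m x a : ℝ} (hm : 1 < m) (hxa : x < a) :
    ∃ ξ ∈ Set.Ioo x a, (a ^ m - x ^ m) / (a - x) = m * ξ ^ (m - 1) := by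
  obtain ⟨ξ, hξ, h⟩ := exists_hasDerivAt_eq_slope (fun t : ℝ => t ^ m)
    (fun t : ℝ => m * t ^ (m - 1)) hxa
    (fun t _ => (Real.hasDerivAt_rpow_const (Or.inr hm.le)).continuousAt.continuousWithinAt)
    (fun t _ => Real.hasDerivAt_rpow_const (Or.inr hm.le))
  exact ⟨ξ, hξ, h.symm⟩

/-- The extended slope `psi` is strictly increasing when both endpoints move right
(strictly for the upper one). -/
lemma psi_lt' {m x x' a a' : ℝ} (hm : 1 < m) (hx0 : 0 ≤ x) (hxa : x ≤ a)
    (hx'0 : 0 ≤ x') (hx'a : x' ≤ a') (hxx : x ≤ x') (haa : a < a') (ha0 : 0 < a) :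
    psi m a x < psi m a' x' := by
  have hsc := strictConvexOn_rpow hm
  rcases eq_or_lt_of_le hxa with rfl | hlt
  · rw [psi, if_pos rfl]
    rcases eq_or_lt_of_le hx'a with rfl | hlt'
    · rw [psi, if_pos rfl]
      exact deriv_mono' hm ha0.le haa
    · rw [psi, if_neg (ne_of_lt hlt')]
      obtain ⟨ξ, hξ, hrep⟩ := slope_rep' hm hlt'
      rw [hrep]
      exact deriv_mono' hm ha0.le (lt_of_le_of_lt hxx hξ.1)
  · rw [psi, if_neg (ne_of_lt hlt)]
    rcases eq_or_lt_of_le hx'a with rfl | hlt'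
    · rw [psi, if_pos rfl]
      obtain ⟨ξ, hξ, hrep⟩ := slope_rep' hm hlt
      rw [hrep]
      exact deriv_mono' hm (le_of_lt (lt_of_le_of_lt hx0 hξ.1)) (lt_of_lt_of_le hξ.2 (le_of_lt haa))
    · rw [psi, if_neg (ne_of_lt hlt')]
      have ha'0 : (0:ℝ) ≤ a' := le_of_lt (lt_trans ha0 haa)
      have h1 : (a ^ m - x ^ m) / (a - x) < (a' ^ m - x ^ m) / (a' - x) := by
        have := hsc.secant_strict_mono (a := x) (x := a) (y := a')
          hx0 (le_of_lt ha0) ha'0 (ne_of_gt hlt) (ne_of_gt (lt_trans hlt haa)) haa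
        simpa using this
      have h2 : (a' ^ m - x ^ m) / (a' - x) ≤ (a' ^ m - x' ^ m) / (a' - x') := by
        have key := hsc.convexOn.secant_mono (a := a') (x := x) (y := x')
          ha'0 hx0 hx'0 (ne_of_lt (lt_of_lt_of_le hlt (le_of_lt haa))) (ne_of_lt hlt') hxx
        have e1 : (x ^ m - a' ^ m) / (x - a') = (a' ^ m - x ^ m) / (a' - x) := by
          rw [show x ^ m - a' ^ m = -(a' ^ m - x ^ m) by ring,
            show x - a' = -(a' - x) by ring, neg_div_neg_eq]
        have e2 : (x' ^ m - a' ^ m) / (x' - a') = (a' ^ m - x' ^ m) / (a' - x') := by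
          rw [show x' ^ m - a' ^ m = -(a' ^ m - x' ^ m) by ring,
            show x' - a' = -(a' - x') by ring, neg_div_neg_eq]
        rwa [e1, e2] at key
      linarith

/-- If `u⁺ : I → (0,∞)` is strictly decreasing on a set of speeds `I ⊆ (0,∞)`
and `u⁻ : I → [0,∞)` satisfies `u⁻(σ) ≤ u⁺(σ)` together with the
Rankine–Hugoniot condition `ψ_{u⁺(σ)}(u⁻(σ)) = σ/c` on `I`, then `u⁻` is
strictly increasing on `I`. -/
theorem stmt6 (m c : ℝ) (hm : 1 < m) (hc : 0 < c) (I : Set ℝ) (hI : I ⊆ Set.Ioi 0)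
    (uplus uminus : ℝ → ℝ)
    (hup : ∀ σ ∈ I, 0 < uplus σ) (hanti : StrictAntiOn uplus I)
    (hum : ∀ σ ∈ I, 0 ≤ uminus σ) (hle : ∀ σ ∈ I, uminus σ ≤ uplus σ)
    (hRH : ∀ σ ∈ I, psi m (uplus σ) (uminus σ) = σ / c) :
    StrictMonoOn uminus I := by
  intro σ₁ h1 σ₂ h2 h12
  by_contra hcon
  push_neg at hcon
  have key : psi m (uplus σ₂) (uminus σ₂) < psi m (uplus σ₁) (uminus σ₁) :=
    psi_lt' hm (hum σ₂ h2) (hle σ₂ h2) (hum σ₁ h1) (hle σ₁ h1) hcon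
      (hanti h1 h2 h12) (hup σ₂ h2)
  rw [hRH σ₁ h1, hRH σ₂ h2] at key
  have := (div_lt_div_iff_of_pos_right hc).mp key
  linarith
end

section
/- Let m > 1, ν > 0, c > 0 be real, let K : (0,1) → ℝ be a function, and let 0 ≤ σ₁ < σ₂. Let a ∈ [0,1) and let r₁, r₂ : (a,1) → (0,1) be differentiable functions such that for each i ∈ {1,2} and every u ∈ (a,1): rᵢ'(u) = σᵢ/(c·u^m) − m·rᵢ(u)/u − (K(u)·ν/(c²·u^m))·√(1−rᵢ(u)²)/rᵢ(u). If there exists δ > 0 such that r₁(u) > r₂(u) for all u ∈ (1−δ, 1), then r₁(u) > r₂(u) for all u ∈ (a,1). -/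
/-- Comparison of orbits of the scalar traveling-wave ODE (u-grafo)
`r'(u) = σ/(c·u^m) - m·r(u)/u - (K(u)·ν/(c²·u^m))·√(1-r(u)²)/r(u)` for two
speeds `σ₁ < σ₂`: if `r₁ > r₂` near `u = 1`, then `r₁ > r₂` on all of `(a,1)`. -/
theorem stmt7 (m ν c : ℝ) (hm : 1 < m) (hν : 0 < ν) (hc : 0 < c)
    (K : ℝ → ℝ) (σ₁ σ₂ : ℝ) (hσ₁ : 0 ≤ σ₁) (hσ : σ₁ < σ₂)
    (a : ℝ) (ha : a ∈ Set.Ico (0:ℝ) 1)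
    (r₁ r₂ : ℝ → ℝ)
    (hr₁mem : ∀ u ∈ Set.Ioo a 1, r₁ u ∈ Set.Ioo (0:ℝ) 1)
    (hr₂mem : ∀ u ∈ Set.Ioo a 1, r₂ u ∈ Set.Ioo (0:ℝ) 1)
    (hode₁ : ∀ u ∈ Set.Ioo a 1, HasDerivAt r₁
      (σ₁ / (c * u ^ m) - m * r₁ u / u -
        (K u * ν / (c ^ 2 * u ^ m)) * Real.sqrt (1 - (r₁ u) ^ 2) / r₁ u) u)
    (hode₂ : ∀ u ∈ Set.Ioo a 1, HasDerivAt r₂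
      (σ₂ / (c * u ^ m) - m * r₂ u / u -
        (K u * ν / (c ^ 2 * u ^ m)) * Real.sqrt (1 - (r₂ u) ^ 2) / r₂ u) u)
    (hnear : ∃ δ > 0, ∀ u ∈ Set.Ioo (1 - δ) 1, r₂ u < r₁ u) :
    ∀ u ∈ Set.Ioo a 1, r₂ u < r₁ u := by
  by_contra hcon
  push_neg at hcon
  obtain ⟨u₀, hu₀, hfu₀⟩ := hcon
  obtain ⟨δ, hδ, hδn⟩ := hnear
  set f : ℝ → ℝ := fun u => r₁ u - r₂ u with hf
  -- derivative of f at any u in (a,1)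
  have hfd : ∀ u ∈ Set.Ioo a 1, HasDerivAt f
      ((σ₁ / (c * u ^ m) - m * r₁ u / u -
        (K u * ν / (c ^ 2 * u ^ m)) * Real.sqrt (1 - (r₁ u) ^ 2) / r₁ u) -
       (σ₂ / (c * u ^ m) - m * r₂ u / u -
        (K u * ν / (c ^ 2 * u ^ m)) * Real.sqrt (1 - (r₂ u) ^ 2) / r₂ u)) u :=
    fun u hu => (hode₁ u hu).sub (hode₂ u hu)
  -- choose t near 1 with f t > 0 and u₀ < t
  set t : ℝ := (max u₀ (1 - δ) + 1) / 2 with ht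
  have hmax1 : max u₀ (1 - δ) < 1 := max_lt hu₀.2 (by linarith)
  have htlt1 : t < 1 := by rw [ht]; linarith
  have hmaxt : max u₀ (1 - δ) < t := by rw [ht]; linarith
  have hu₀t : u₀ < t := lt_of_le_of_lt (le_max_left _ _) hmaxt
  have htIoo : t ∈ Set.Ioo a 1 := ⟨lt_trans hu₀.1 hu₀t, htlt1⟩
  have hft : 0 < f t := by
    have := hδn t ⟨lt_of_le_of_lt (le_max_right _ _) hmaxt, htlt1⟩
    simp only [hf]
    linarith
  -- the crossing set
  set S : Set ℝ := Set.Icc u₀ t ∩ {u | f u ≤ 0} with hS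
  have hsub : ∀ u ∈ Set.Icc u₀ t, u ∈ Set.Ioo a 1 := fun u hu =>
    ⟨lt_of_lt_of_le hu₀.1 hu.1, lt_of_le_of_lt hu.2 htlt1⟩
  have hcontIcc : ContinuousOn f (Set.Icc u₀ t) := fun u hu =>
    ((hfd u (hsub u hu)).continuousAt).continuousWithinAt
  have hSclosed : IsClosed S := by
    have h := hcontIcc.preimage_isClosed_of_isClosed isClosed_Icc
      (isClosed_Iic (a := (0:ℝ)))
    have heq : S = Set.Icc u₀ t ∩ f ⁻¹' Set.Iic (0:ℝ) := rfl
    rw [heq]; exact h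
  have hScpt : IsCompact S :=
    isCompact_Icc.of_isClosed_subset hSclosed Set.inter_subset_left
  have hSne : S.Nonempty := ⟨u₀, ⟨le_refl _, le_of_lt hu₀t⟩, by simp [hf]; linarith⟩
  have hw := hScpt.sSup_mem hSne
  set w : ℝ := sSup S with hwdef
  obtain ⟨hwIcc, hfw_le⟩ := hw
  have hfw_le' : f w ≤ 0 := hfw_le
  have hwIoo : w ∈ Set.Ioo a 1 := hsub w hwIcc
  have hwt : w < t := lt_of_le_of_ne hwIcc.2 (by
    intro h; rw [h] at hfw_le'; linarith)
  have hBdd : BddAbove S := hScpt.bddAbove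
  -- f > 0 strictly to the right of w, up to t
  have hpos : ∀ u ∈ Set.Ioo w t, 0 < f u := by
    intro u hu
    by_contra h
    push_neg at h
    have huS : u ∈ S := ⟨⟨le_trans hwIcc.1 (le_of_lt hu.1), le_of_lt hu.2⟩, h⟩
    exact absurd (le_csSup hBdd huS) (not_le.mpr hu.1)
  -- f w = 0
  have hfw0 : f w = 0 := by
    have hcw : ContinuousAt f w := (hfd w hwIoo).continuousAt
    have htend : Filter.Tendsto f (nhdsWithin w (Set.Ioi w)) (nhds (f w)) :=
      hcw.continuousWithinAt.tendsto
    have hev : ∀ᶠ u in nhdsWithin w (Set.Ioi w), 0 ≤ f u := by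
      filter_upwards [Ioo_mem_nhdsGT_of_mem ⟨le_refl w, hwt⟩] with u hu
      exact le_of_lt (hpos u hu)
    have h0 : 0 ≤ f w := ge_of_tendsto htend hev
    linarith
  have hrw : r₁ w = r₂ w := by simp only [hf] at hfw0; linarith
  -- the derivative of f at w
  have hwpos : 0 < w := lt_of_le_of_lt ha.1 hwIoo.1
  have hden : 0 < c * w ^ m := mul_pos hc (Real.rpow_pos_of_pos hwpos m)
  set D : ℝ := (σ₁ / (c * w ^ m) - m * r₁ w / w -
        (K w * ν / (c ^ 2 * w ^ m)) * Real.sqrt (1 - (r₁ w) ^ 2) / r₁ w) -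
       (σ₂ / (c * w ^ m) - m * r₂ w / w -
        (K w * ν / (c ^ 2 * w ^ m)) * Real.sqrt (1 - (r₂ w) ^ 2) / r₂ w) with hD
  have hDval : D = (σ₁ - σ₂) / (c * w ^ m) := by
    rw [hD, hrw]; ring
  have hDneg : D < 0 := by
    rw [hDval]; exact div_neg_of_neg_of_pos (by linarith) hden
  -- but the derivative at w must be nonnegative
  have hslope : Filter.Tendsto (slope f w) (nhdsWithin w {w}ᶜ) (nhds D) :=
    hasDerivAt_iff_tendsto_slope.mp (hfd w hwIoo)
  have hslope' : Filter.Tendsto (slope f w) (nhdsWithin w (Set.Ioi w)) (nhds D) :=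
    hslope.mono_left (nhdsWithin_mono w (fun x hx => ne_of_gt hx))
  have hev : ∀ᶠ u in nhdsWithin w (Set.Ioi w), 0 ≤ slope f w u := by
    filter_upwards [Ioo_mem_nhdsGT_of_mem ⟨le_refl w, hwt⟩] with u hu
    rw [slope_def_field, div_eq_mul_inv]
    have h1 : 0 ≤ f u - f w := by have := hpos u hu; linarith
    have h2 : 0 ≤ (u - w)⁻¹ := inv_nonneg.mpr (by linarith [hu.1])
    exact mul_nonneg h1 h2
  have : 0 ≤ D := ge_of_tendsto hslope' hev
  linarith
end

section
/- Let m > 1, ν > 0, c > 0 be real and let K : (0,1) → [0,∞) be a function. Then there is no differentiable function r : (0,1) → (0,1] satisfying, for all u ∈ (0,1), the equation r'(u) = −m·r(u)/u − (K(u)·ν/(c²·u^m))·√(1−r(u)²)/r(u) (i.e. the scalar traveling-wave ODE (u-grafo) with σ = 0 has no solution defined on the whole interval (0,1) with values in (0,1]). -/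
/-!
Multiplying the equation by `u^m` turns its first two terms into `(u^m r)'`, so with `σ = 0`
the remaining term gives `(u^m r)' = -K ν √(1 - r²) / (c² r) ≤ 0`: the function `u^m r(u)` is
nonincreasing on `(0,1)`. It is positive, yet squeezed by `u^m → 0` as `u → 0⁺`, which is
impossible for a nonincreasing function.
-/

open Set Filter Topology

theorem hasDerivAt_rpow_mul {m u r' : ℝ} {r : ℝ → ℝ} (hu : 0 < u) (hr : HasDerivAt r r' u) :
    HasDerivAt (fun v => v ^ m * r v) (u ^ m * (r' + m * r u / u)) u := by
  refine ((Real.hasDerivAt_rpow_const (p := m) (Or.inl hu.ne')).mul hr).congr_deriv ?_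
  rw [Real.rpow_sub hu, Real.rpow_one]
  field_simp
  ring

theorem antitoneOn_rpow_mul_of_hasDerivAt {m a b : ℝ} {r F : ℝ → ℝ} (ha : 0 ≤ a)
    (hr : ∀ u ∈ Ioo a b, HasDerivAt r (-(m * r u / u) - F u) u)
    (hF : ∀ u ∈ Ioo a b, 0 ≤ F u) :
    AntitoneOn (fun u => u ^ m * r u) (Ioo a b) := by
  have hderiv : ∀ u ∈ Ioo a b, HasDerivAt (fun v => v ^ m * r v) (-(u ^ m * F u)) u := by
    intro u hu
    convert hasDerivAt_rpow_mul (ha.trans_lt hu.1) (hr u hu) using 1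
    ring
  refine antitoneOn_of_hasDerivWithinAt_nonpos (f' := fun u => -(u ^ m * F u)) (convex_Ioo a b)
    (fun u hu => (hderiv u hu).continuousAt.continuousWithinAt) ?_ ?_
  · rw [interior_Ioo]
    exact fun u hu => (hderiv u hu).hasDerivWithinAt
  · rw [interior_Ioo]
    intro u hu
    exact neg_nonpos.2 (mul_nonneg (Real.rpow_nonneg (ha.trans hu.1.le) m) (hF u hu))

theorem AntitoneOn.le_of_tendsto_nhdsGT {g : ℝ → ℝ} {a b L : ℝ}
    (hg : AntitoneOn g (Ioo a b)) (hlim : Tendsto g (𝓝[>] a) (𝓝 L)) {x : ℝ}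
    (hx : x ∈ Ioo a b) : g x ≤ L :=
  ge_of_tendsto hlim <| mem_of_superset (Ioo_mem_nhdsGT hx.1) fun _ hy =>
    hg ⟨hy.1, hy.2.trans hx.2⟩ hx hy.2.le

theorem tendsto_rpow_mul_nhdsGT_zero {m : ℝ} (hm : 0 < m) {r : ℝ → ℝ}
    (hr : ∀ u ∈ Ioo (0 : ℝ) 1, r u ∈ Ioc (0 : ℝ) 1) :
    Tendsto (fun u => u ^ m * r u) (𝓝[>] 0) (𝓝 0) := by
  have hpow : Tendsto (fun u : ℝ => u ^ m) (𝓝[>] 0) (𝓝 0) := by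
    simpa [Real.zero_rpow hm.ne'] using
      (Real.continuousAt_rpow_const 0 m (Or.inr hm.le)).tendsto.mono_left nhdsWithin_le_nhds
  have hIoo : ∀ᶠ u in 𝓝[>] (0 : ℝ), u ∈ Ioo (0 : ℝ) 1 := Ioo_mem_nhdsGT one_pos
  refine tendsto_of_tendsto_of_tendsto_of_le_of_le' tendsto_const_nhds hpow ?_ ?_
  · filter_upwards [hIoo] with u hu
    exact mul_nonneg (Real.rpow_nonneg hu.1.le m) (hr u hu).1.le
  · filter_upwards [hIoo] with u hu
    exact mul_le_of_le_one_right (Real.rpow_nonneg hu.1.le m) (hr u hu).2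

theorem stmt8_general (m ν c : ℝ) (hm : 1 < m) (hν : 0 < ν)
    (K : ℝ → ℝ) (hK : ∀ u ∈ Set.Ioo (0:ℝ) 1, 0 ≤ K u) :
    ¬ ∃ r : ℝ → ℝ,
      (∀ u ∈ Set.Ioo (0:ℝ) 1, r u ∈ Set.Ioc (0:ℝ) 1) ∧
      (∀ u ∈ Set.Ioo (0:ℝ) 1, HasDerivAt r
        (-(m * r u / u) -
          (K u * ν / (c ^ 2 * u ^ m)) * Real.sqrt (1 - (r u) ^ 2) / r u) u) := by
  rintro ⟨r, hr, hr'⟩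
  have hanti : AntitoneOn (fun u => u ^ m * r u) (Ioo 0 1) := by
    refine antitoneOn_rpow_mul_of_hasDerivAt le_rfl hr' fun u hu => ?_
    have := hu.1
    have := (hr u hu).1
    have := hK u hu
    positivity
  have hhalf : (1 / 2 : ℝ) ∈ Ioo 0 1 := by norm_num
  have hnonpos := hanti.le_of_tendsto_nhdsGT
    (tendsto_rpow_mul_nhdsGT_zero (zero_lt_one.trans hm) hr) hhalf
  have hr_half := (hr _ hhalf).1
  have hpos : (0 : ℝ) < (1 / 2) ^ m * r (1 / 2) := by positivity
  exact hpos.not_ge hnonpos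

/-- The scalar traveling-wave ODE (u-grafo) with `σ = 0`, namely
`r'(u) = -m·r(u)/u - (K(u)·ν/(c²·u^m))·√(1-r(u)²)/r(u)` with `K ≥ 0`, has no
differentiable solution defined on all of `(0,1)` with values in `(0,1]`. -/
theorem stmt8 (m ν c : ℝ) (hm : 1 < m) (hν : 0 < ν) (hc : 0 < c)
    (K : ℝ → ℝ) (hK : ∀ u ∈ Set.Ioo (0:ℝ) 1, 0 ≤ K u) :
    ¬ ∃ r : ℝ → ℝ,
      (∀ u ∈ Set.Ioo (0:ℝ) 1, r u ∈ Set.Ioc (0:ℝ) 1) ∧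
      (∀ u ∈ Set.Ioo (0:ℝ) 1, HasDerivAt r
        (-(m * r u / u) -
          (K u * ν / (c ^ 2 * u ^ m)) * Real.sqrt (1 - (r u) ^ 2) / r u) u) :=
  stmt8_general m ν c hm hν K hK
end

section
/- Let ν > 0, c > 0, u₀ ∈ (0,1), δ > 0 and α > 0 be real. Let r : (u₀, u₀+δ) → (0,1) be continuous with lim_{u→u₀⁺} (1−r(u))/(u−u₀) = α. Let ξ₂ ∈ ℝ, η > 0, and let u : (ξ₂−η, ξ₂) → (u₀, u₀+δ) be differentiable with u'(ξ) = −(c/ν)·r(u(ξ))·u(ξ)/√(1−r(u(ξ))²) for all ξ, and lim_{ξ→ξ₂⁻} u(ξ) = u₀. Then lim_{ξ→ξ₂⁻} (u(ξ)−u₀)^{1/2}·|u'(ξ)| = c·u₀/(√(2α)·ν) and lim_{ξ→ξ₂⁻} (u(ξ)−u₀)/(ξ₂−ξ)^{2/3} = (3·c·u₀/(2·√(2α)·ν))^{2/3}. -/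
/-!
As `u → u₀`, the orbit satisfies `r → 1` and `1 - r² ~ 2α (u - u₀)`, so the equation gives
`√(u - u₀) · u' → -L` with `L = c u₀ / (√(2α) ν)`. Hence `((u - u₀)^{3/2})' = (3/2) √(u - u₀) u'`
tends to `-(3/2) L`, and L'Hôpital's rule against `ξ₂ - ξ` yields
`(u - u₀)^{3/2} ~ (3/2) L (ξ₂ - ξ)`.
-/

open Filter Set Topology

section SlopeAtTouchingPoint

variable {g r : ℝ → ℝ} {s : Set ℝ} {a α β : ℝ}

theorem tendsto_zero_of_tendsto_div_sub (ha : a ∉ s)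
    (h : Tendsto (fun v => g v / (v - a)) (𝓝[s] a) (𝓝 β)) :
    Tendsto g (𝓝[s] a) (𝓝 0) := by
  have hsub : Tendsto (fun v => v - a) (𝓝[s] a) (𝓝 0) :=
    tendsto_sub_nhds_zero_iff.2 nhdsWithin_le_nhds
  have hprod : Tendsto (fun v => g v / (v - a) * (v - a)) (𝓝[s] a) (𝓝 0) := by
    simpa using h.mul hsub
  refine hprod.congr' ?_
  filter_upwards [self_mem_nhdsWithin] with v hv
  exact div_mul_cancel₀ _ (sub_ne_zero.2 (ne_of_mem_of_not_mem hv ha))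

theorem tendsto_sqrt_sub_div_sqrt (hs : s ⊆ Ici a) (hβ : β ≠ 0)
    (h : Tendsto (fun v => g v / (v - a)) (𝓝[s] a) (𝓝 β)) :
    Tendsto (fun v => √(v - a) / √(g v)) (𝓝[s] a) (𝓝 (√β)⁻¹) := by
  rw [← Real.sqrt_inv]
  refine ((h.inv₀ hβ).sqrt).congr' ?_
  filter_upwards [self_mem_nhdsWithin] with v hv
  rw [inv_div, Real.sqrt_div (sub_nonneg.2 (hs hv))]

theorem tendsto_one_of_tendsto_one_sub_div_sub (ha : a ∉ s)
    (h : Tendsto (fun v => (1 - r v) / (v - a)) (𝓝[s] a) (𝓝 α)) :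
    Tendsto r (𝓝[s] a) (𝓝 1) := by
  simpa using (tendsto_zero_of_tendsto_div_sub ha h).const_sub 1

theorem tendsto_one_sub_sq_div_sub (ha : a ∉ s)
    (h : Tendsto (fun v => (1 - r v) / (v - a)) (𝓝[s] a) (𝓝 α)) :
    Tendsto (fun v => (1 - r v ^ 2) / (v - a)) (𝓝[s] a) (𝓝 (2 * α)) := by
  convert h.mul ((tendsto_one_of_tendsto_one_sub_div_sub ha h).const_add 1) using 2 <;> ring

/-- The quantity `√(u - u₀) · u'` along an orbit of `u' = -k r(u) u / √(1 - r(u)²)`. -/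
theorem tendsto_sqrt_sub_mul_div_sqrt_one_sub_sq (k : ℝ) (hs : s ⊆ Ioi a) (hα : α ≠ 0)
    (h : Tendsto (fun v => (1 - r v) / (v - a)) (𝓝[s] a) (𝓝 α)) :
    Tendsto (fun v => √(v - a) * (-k * r v * v / √(1 - r v ^ 2))) (𝓝[s] a)
      (𝓝 (-k * a * (√(2 * α))⁻¹)) := by
  have ha : a ∉ s := fun ha => lt_irrefl a (hs ha)
  have hr := tendsto_one_of_tendsto_one_sub_div_sub ha h
  have hq := tendsto_sqrt_sub_div_sqrt (hs.trans Ioi_subset_Ici_self) (by positivity)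
    (tendsto_one_sub_sq_div_sub ha h)
  have hid : Tendsto (fun v : ℝ => v) (𝓝[s] a) (𝓝 a) := nhdsWithin_le_nhds
  convert ((tendsto_const_nhds (x := -k)).mul hr).mul hid |>.mul hq using 2 <;> ring

end SlopeAtTouchingPoint

section PowerLaw

variable {u : ℝ → ℝ} {a b L : ℝ}

theorem tendsto_rpow_three_halves_div_sub
    (hd : ∀ᶠ x in 𝓝[<] b, DifferentiableAt ℝ u x) (hu : Tendsto u (𝓝[<] b) (𝓝 a))
    (h : Tendsto (fun x => √(u x - a) * deriv u x) (𝓝[<] b) (𝓝 (-L))) :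
    Tendsto (fun x => (u x - a) ^ ((3 : ℝ) / 2) / (b - x)) (𝓝[<] b) (𝓝 (3 / 2 * L)) := by
  have hf : ∀ᶠ x in 𝓝[<] b, HasDerivAt (fun x => (u x - a) ^ ((3 : ℝ) / 2))
      (3 / 2 * (√(u x - a) * deriv u x)) x := by
    filter_upwards [hd] with x hx
    convert (hx.hasDerivAt.sub_const a).rpow_const (p := 3 / 2) (Or.inr (by norm_num)) using 1
    rw [Real.sqrt_eq_rpow]
    norm_num
    ring
  have hfa : Tendsto (fun x => (u x - a) ^ ((3 : ℝ) / 2)) (𝓝[<] b) (𝓝 0) := by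
    have := ((tendsto_sub_nhds_zero_iff.2 hu).rpow_const (p := 3 / 2) (Or.inr (by norm_num)))
    simpa using this
  have hga : Tendsto (fun x => b - x) (𝓝[<] b) (𝓝 0) := by
    simpa using ((continuous_sub_left b).tendsto b).mono_left (nhdsWithin_le_nhds (s := Iio b))
  refine HasDerivAt.lhopital_zero_nhdsLT hf (.of_forall fun x => (hasDerivAt_id x).const_sub b)
    (.of_forall fun _ => neg_ne_zero.2 one_ne_zero) hfa hga ?_
  convert h.const_mul (3 / 2) |>.neg using 2 <;> simp [div_neg]

theorem tendsto_sub_div_rpow_two_thirds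
    (hd : ∀ᶠ x in 𝓝[<] b, DifferentiableAt ℝ u x) (hu : Tendsto u (𝓝[<] b) (𝓝 a))
    (hle : ∀ᶠ x in 𝓝[<] b, a ≤ u x)
    (h : Tendsto (fun x => √(u x - a) * deriv u x) (𝓝[<] b) (𝓝 (-L))) :
    Tendsto (fun x => (u x - a) / (b - x) ^ ((2 : ℝ) / 3)) (𝓝[<] b)
      (𝓝 ((3 / 2 * L) ^ ((2 : ℝ) / 3))) := by
  refine ((tendsto_rpow_three_halves_div_sub hd hu h).rpow_const
    (Or.inr (by norm_num))).congr' ?_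
  filter_upwards [hle, self_mem_nhdsWithin] with x hx hxb
  rw [Real.div_rpow (by positivity) (sub_nonneg.2 (le_of_lt hxb)),
    ← Real.rpow_mul (sub_nonneg.2 hx)]
  norm_num

end PowerLaw

theorem stmt11_general (ν c u₀ δ α : ℝ) (hν : 0 < ν) (hc : 0 < c)
    (hu₀ : u₀ ∈ Set.Ioo (0:ℝ) 1) (hα : 0 < α)
    (r : ℝ → ℝ)
    (hslope : Filter.Tendsto (fun v => (1 - r v) / (v - u₀))
      (nhdsWithin u₀ (Set.Ioo u₀ (u₀ + δ))) (nhds α))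
    (ξ₂ η : ℝ) (hη : 0 < η)
    (u : ℝ → ℝ)
    (humem : ∀ ξ ∈ Set.Ioo (ξ₂ - η) ξ₂, u ξ ∈ Set.Ioo u₀ (u₀ + δ))
    (hode : ∀ ξ ∈ Set.Ioo (ξ₂ - η) ξ₂,
      HasDerivAt u (-(c / ν) * r (u ξ) * u ξ / Real.sqrt (1 - (r (u ξ)) ^ 2)) ξ)
    (hlim : Filter.Tendsto u (nhdsWithin ξ₂ (Set.Ioo (ξ₂ - η) ξ₂)) (nhds u₀)) :
    Filter.Tendsto (fun ξ => Real.sqrt (u ξ - u₀) * |deriv u ξ|)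
      (nhdsWithin ξ₂ (Set.Ioo (ξ₂ - η) ξ₂))
      (nhds (c * u₀ / (Real.sqrt (2 * α) * ν))) ∧
    Filter.Tendsto (fun ξ => (u ξ - u₀) / (ξ₂ - ξ) ^ ((2:ℝ) / 3))
      (nhdsWithin ξ₂ (Set.Ioo (ξ₂ - η) ξ₂))
      (nhds ((3 * c * u₀ / (2 * Real.sqrt (2 * α) * ν)) ^ ((2:ℝ) / 3))) := by
  have hleft : 𝓝[Ioo (ξ₂ - η) ξ₂] ξ₂ = 𝓝[<] ξ₂ := nhdsWithin_Ioo_eq_nhdsLT (by linarith)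
  have hmem : ∀ᶠ ξ in 𝓝[<] ξ₂, ξ ∈ Ioo (ξ₂ - η) ξ₂ := hleft ▸ self_mem_nhdsWithin
  rw [hleft] at hlim ⊢
  have hu : Tendsto u (𝓝[<] ξ₂) (𝓝[Ioo u₀ (u₀ + δ)] u₀) :=
    tendsto_nhdsWithin_iff.2 ⟨hlim, hmem.mono humem⟩
  have hkey : Tendsto (fun ξ => √(u ξ - u₀) * deriv u ξ) (𝓝[<] ξ₂)
      (𝓝 (-(c / ν * u₀ / √(2 * α)))) := by
    have := (tendsto_sqrt_sub_mul_div_sqrt_one_sub_sq (c / ν) (fun _ hv => hv.1) hα.ne'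
      hslope).comp hu
    rw [show -(c / ν * u₀ / √(2 * α)) = -(c / ν) * u₀ * (√(2 * α))⁻¹ by ring]
    refine this.congr' ?_
    filter_upwards [hmem] with ξ hξ
    rw [Function.comp_apply, (hode ξ hξ).deriv]
  constructor
  · convert hkey.abs using 2 with ξ
    · rw [abs_mul, abs_of_nonneg (Real.sqrt_nonneg _)]
    · rw [abs_neg, abs_of_pos (by have := hu₀.1; positivity)]
      ring
  · convert tendsto_sub_div_rpow_two_thirds (hmem.mono fun ξ hξ => (hode ξ hξ).differentiableAt)
      hlim (hmem.mono fun ξ hξ => (humem ξ hξ).1.le) hkey using 3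
    ring

/-- Power-law behavior of a traveling-wave profile at the left of an entropic
jump at `ξ₂`: if `u' = -(c/ν)·r(u)·u/√(1-r(u)²)`, `u → u₀` as `ξ → ξ₂⁻`, and
the orbit touches `r = 1` at `u₀` with normalized slope `α`
(`(1-r(u))/(u-u₀) → α` as `u → u₀⁺`), then
`√(u(ξ)-u₀)·|u'(ξ)| → c·u₀/(√(2α)·ν)` and
`(u(ξ)-u₀)/(ξ₂-ξ)^{2/3} → (3·c·u₀/(2·√(2α)·ν))^{2/3}` as `ξ → ξ₂⁻`. -/
theorem stmt11 (ν c u₀ δ α : ℝ) (hν : 0 < ν) (hc : 0 < c)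
    (hu₀ : u₀ ∈ Set.Ioo (0:ℝ) 1) (hδ : 0 < δ) (hα : 0 < α)
    (r : ℝ → ℝ) (hrc : ContinuousOn r (Set.Ioo u₀ (u₀ + δ)))
    (hrmem : ∀ v ∈ Set.Ioo u₀ (u₀ + δ), r v ∈ Set.Ioo (0:ℝ) 1)
    (hslope : Filter.Tendsto (fun v => (1 - r v) / (v - u₀))
      (nhdsWithin u₀ (Set.Ioo u₀ (u₀ + δ))) (nhds α))
    (ξ₂ η : ℝ) (hη : 0 < η)
    (u : ℝ → ℝ)
    (humem : ∀ ξ ∈ Set.Ioo (ξ₂ - η) ξ₂, u ξ ∈ Set.Ioo u₀ (u₀ + δ))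
    (hode : ∀ ξ ∈ Set.Ioo (ξ₂ - η) ξ₂,
      HasDerivAt u (-(c / ν) * r (u ξ) * u ξ / Real.sqrt (1 - (r (u ξ)) ^ 2)) ξ)
    (hlim : Filter.Tendsto u (nhdsWithin ξ₂ (Set.Ioo (ξ₂ - η) ξ₂)) (nhds u₀)) :
    Filter.Tendsto (fun ξ => Real.sqrt (u ξ - u₀) * |deriv u ξ|)
      (nhdsWithin ξ₂ (Set.Ioo (ξ₂ - η) ξ₂))
      (nhds (c * u₀ / (Real.sqrt (2 * α) * ν))) ∧
    Filter.Tendsto (fun ξ => (u ξ - u₀) / (ξ₂ - ξ) ^ ((2:ℝ) / 3))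
      (nhdsWithin ξ₂ (Set.Ioo (ξ₂ - η) ξ₂))
      (nhds ((3 * c * u₀ / (2 * Real.sqrt (2 * α) * ν)) ^ ((2:ℝ) / 3))) :=
  stmt11_general ν c u₀ δ α hν hc hu₀ hα r hslope ξ₂ η hη u humem hode hlim
end

section
/- Let m > 1, ν > 0, c > 0, σ > 0 be real and F : (0,1) → ℝ a function. Let I ⊆ ℝ be an open interval and (u, r) : I → (0,1) × (0,1) a continuously differentiable solution of the planar system (singular). Then u'(ξ) < 0 for all ξ ∈ I, the flux z(ξ) := ν·u(ξ)^m·u'(ξ)/√(u(ξ)² + (ν²/c²)·u'(ξ)²) satisfies z(ξ) = −c·u(ξ)^m·r(ξ), z is differentiable on I, and z'(ξ) + σ·u'(ξ) + F(u(ξ)) = 0 for all ξ ∈ I; i.e. u is a classical solution of the traveling-wave equation ν·(u^m·u'/√(u² + (ν²/c²)·u'²))' + σ·u' + F(u) = 0 on I. -/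
/-!
Along the solution, `u' = -(c/ν)·u·r/√(1-r²)` gives `u² + (ν²/c²)·u'² = u²/(1-r²)`, so the flux
`z` collapses to `-c·u^m·r`, a product of differentiable functions. The `r`-equation is built so
that in `(u^m r)' = m u^{m-1} u' r + u^m r'` the first term cancels, leaving
`(u^m r)' = (σ u' + F(u))/c`.
-/

open Real

noncomputable def flux (ν c m U U' : ℝ) : ℝ :=
  ν * U ^ m * U' / √(U ^ 2 + (ν ^ 2 / c ^ 2) * U' ^ 2)

section

variable {ν c m σ U R : ℝ}

lemma sqrt_one_sub_sq_pos (hR : R ^ 2 < 1) : 0 < √(1 - R ^ 2) :=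
  sqrt_pos.2 (by linarith)

lemma singular_velocity_neg (hν : 0 < ν) (hc : 0 < c) (hU : 0 < U) (hR : R ∈ Set.Ioo (0 : ℝ) 1) :
    -(c / ν) * R * U / √(1 - R ^ 2) < 0 := by
  have hR2 : R ^ 2 < 1 := by nlinarith [hR.1, hR.2]
  have : 0 < c / ν * R * U := by have := hR.1; positivity
  exact div_neg_of_neg_of_pos (by linarith) (sqrt_one_sub_sq_pos hR2)

lemma flux_singular_velocity (hν : ν ≠ 0) (hc : c ≠ 0) (hU : 0 < U) (hR : R ^ 2 < 1) :
    flux ν c m U (-(c / ν) * R * U / √(1 - R ^ 2)) = -c * U ^ m * R := by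
  have hs := sqrt_one_sub_sq_pos hR
  have hs2 : √(1 - R ^ 2) ^ 2 = 1 - R ^ 2 := sq_sqrt (by linarith)
  have hradicand : U ^ 2 + (ν ^ 2 / c ^ 2) * (-(c / ν) * R * U / √(1 - R ^ 2)) ^ 2
      = (U / √(1 - R ^ 2)) ^ 2 := by
    field_simp
    linear_combination hs2
  rw [flux, hradicand, sqrt_sq (div_pos hU hs).le]
  field_simp

lemma singular_flux_deriv_identity (hν : ν ≠ 0) (hc : c ≠ 0) (hU : 0 < U) (hR : R ^ 2 < 1)
    {U' R' f : ℝ} (hU' : U' = -(c / ν) * R * U / √(1 - R ^ 2))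
    (hR' : R' = U ^ (1 - m) * (R / √(1 - R ^ 2)) * (m * U ^ (m - 1) * (c / ν) * R - σ / ν)
      + f / (c * U ^ m)) :
    -c * (U' * m * U ^ (m - 1) * R + U ^ m * R') = -(σ * U' + f) := by
  have hs := (sqrt_one_sub_sq_pos hR).ne'
  have hUm : U ^ m ≠ 0 := (rpow_pos_of_pos hU m).ne'
  have hpow : U ^ m * U ^ (1 - m) = U := by
    rw [← rpow_add hU]; norm_num
  rw [hR', hU']
  field_simp
  linear_combination c * R * (σ - c * m * U ^ (m - 1) * R) * hpow

end

theorem stmt14_general (m ν c σ : ℝ) (hν : 0 < ν) (hc : 0 < c)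
    (F : ℝ → ℝ) (a b : ℝ)
    (u r u' r' : ℝ → ℝ)
    (humem : ∀ ξ ∈ Set.Ioo a b, u ξ ∈ Set.Ioo (0:ℝ) 1)
    (hrmem : ∀ ξ ∈ Set.Ioo a b, r ξ ∈ Set.Ioo (0:ℝ) 1)
    (hu : ∀ ξ ∈ Set.Ioo a b, HasDerivAt u (u' ξ) ξ)
    (hr : ∀ ξ ∈ Set.Ioo a b, HasDerivAt r (r' ξ) ξ)
    (hequ : ∀ ξ ∈ Set.Ioo a b,
      u' ξ = -(c / ν) * r ξ * u ξ / Real.sqrt (1 - (r ξ) ^ 2))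
    (heqr : ∀ ξ ∈ Set.Ioo a b,
      r' ξ = (u ξ) ^ (1 - m) * (r ξ / Real.sqrt (1 - (r ξ) ^ 2)) *
          (m * (u ξ) ^ (m - 1) * (c / ν) * r ξ - σ / ν) + F (u ξ) / (c * (u ξ) ^ m)) :
    (∀ ξ ∈ Set.Ioo a b, u' ξ < 0) ∧
    (∀ ξ ∈ Set.Ioo a b,
      ν * (u ξ) ^ m * u' ξ / Real.sqrt ((u ξ) ^ 2 + (ν ^ 2 / c ^ 2) * (u' ξ) ^ 2) =
        -c * (u ξ) ^ m * r ξ) ∧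
    (∀ ξ ∈ Set.Ioo a b,
      HasDerivAt (fun η => ν * (u η) ^ m * u' η /
          Real.sqrt ((u η) ^ 2 + (ν ^ 2 / c ^ 2) * (u' η) ^ 2))
        (-(σ * u' ξ + F (u ξ))) ξ) := by
  have hr2 : ∀ ξ ∈ Set.Ioo a b, r ξ ^ 2 < 1 := fun ξ hξ => by
    nlinarith [(hrmem ξ hξ).1, (hrmem ξ hξ).2]
  have hflux : ∀ ξ ∈ Set.Ioo a b, flux ν c m (u ξ) (u' ξ) = -c * u ξ ^ m * r ξ :=
    fun ξ hξ => by
      rw [hequ ξ hξ]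
      exact flux_singular_velocity hν.ne' hc.ne' (humem ξ hξ).1 (hr2 ξ hξ)
  refine ⟨fun ξ hξ => hequ ξ hξ ▸ singular_velocity_neg hν hc (humem ξ hξ).1 (hrmem ξ hξ),
    hflux, fun ξ hξ => ?_⟩
  have hprod : HasDerivAt (fun η => -c * (u η ^ m * r η))
      (-c * (u' ξ * m * u ξ ^ (m - 1) * r ξ + u ξ ^ m * r' ξ)) ξ :=
    (((hu ξ hξ).rpow_const (Or.inl (humem ξ hξ).1.ne')).mul (hr ξ hξ)).const_mul (-c)
  rw [singular_flux_deriv_identity hν.ne' hc.ne' (humem ξ hξ).1 (hr2 ξ hξ) (hequ ξ hξ)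
    (heqr ξ hξ)] at hprod
  refine hprod.congr_of_eventuallyEq ?_
  filter_upwards [isOpen_Ioo.mem_nhds hξ] with η hη
  rw [← mul_assoc]
  exact hflux η hη

/-- A `C¹` solution `(u,r)` of the planar traveling-wave system (singular) on an
open interval, with values in `(0,1) × (0,1)`, has `u' < 0`, its flux
`z = ν·u^m·u'/√(u² + (ν²/c²)·u'²)` equals `-c·u^m·r`, and `z` is differentiable
with `z' + σ·u' + F(u) = 0`; i.e. `u` is a classical solution of the
traveling-wave equation. -/
theorem stmt14 (m ν c σ : ℝ) (hm : 1 < m) (hν : 0 < ν) (hc : 0 < c) (hσ : 0 < σ)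
    (F : ℝ → ℝ) (a b : ℝ)
    (u r u' r' : ℝ → ℝ)
    (humem : ∀ ξ ∈ Set.Ioo a b, u ξ ∈ Set.Ioo (0:ℝ) 1)
    (hrmem : ∀ ξ ∈ Set.Ioo a b, r ξ ∈ Set.Ioo (0:ℝ) 1)
    (hu : ∀ ξ ∈ Set.Ioo a b, HasDerivAt u (u' ξ) ξ)
    (hr : ∀ ξ ∈ Set.Ioo a b, HasDerivAt r (r' ξ) ξ)
    (hu'c : ContinuousOn u' (Set.Ioo a b)) (hr'c : ContinuousOn r' (Set.Ioo a b))
    (hequ : ∀ ξ ∈ Set.Ioo a b,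
      u' ξ = -(c / ν) * r ξ * u ξ / Real.sqrt (1 - (r ξ) ^ 2))
    (heqr : ∀ ξ ∈ Set.Ioo a b,
      r' ξ = (u ξ) ^ (1 - m) * (r ξ / Real.sqrt (1 - (r ξ) ^ 2)) *
          (m * (u ξ) ^ (m - 1) * (c / ν) * r ξ - σ / ν) + F (u ξ) / (c * (u ξ) ^ m)) :
    (∀ ξ ∈ Set.Ioo a b, u' ξ < 0) ∧
    (∀ ξ ∈ Set.Ioo a b,
      ν * (u ξ) ^ m * u' ξ / Real.sqrt ((u ξ) ^ 2 + (ν ^ 2 / c ^ 2) * (u' ξ) ^ 2) =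
        -c * (u ξ) ^ m * r ξ) ∧
    (∀ ξ ∈ Set.Ioo a b,
      HasDerivAt (fun η => ν * (u η) ^ m * u' η /
          Real.sqrt ((u η) ^ 2 + (ν ^ 2 / c ^ 2) * (u' η) ^ 2))
        (-(σ * u' ξ + F (u ξ))) ξ) :=
  stmt14_general m ν c σ hν hc F a b u r u' r' humem hrmem hu hr hequ heqr
end

section
/- Let p ≥ 1 be real and let F : [0,1] → [0,∞) be continuous with liminf_{s→0⁺} F(s)/s^p = k for some k ∈ (0,∞], and lim_{s→1⁻} F(s)/(1−s) = k₁ for some k₁ ∈ (0,∞). Let u : ℝ → [0,1] be continuous with ∫_ℝ F(u(ξ)) dξ < ∞, lim_{ξ→+∞} u(ξ) = 0 and lim_{ξ→−∞} u(ξ) = 1. Then ∫_0^∞ u(ξ)^p dξ < ∞ and ∫_{−∞}^0 (1 − u(ξ)) dξ < ∞. -/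
open MeasureTheory
open scoped ENNReal

/-!
Near `0` the hypothesis on the liminf gives `s ^ p = O(F s)`, and near `1` the limit gives
`1 - s = O(F s)`. Since `u → 0` at `+∞` and `u → 1` at `-∞`, composing with `u` yields
`u ^ p = O(F ∘ u)` at `+∞` and `1 - u = O(F ∘ u)` at `-∞`; as `F ∘ u` is integrable and the
left-hand sides are continuous, both are integrable on the corresponding half-lines.
-/

open Filter Set Asymptotics Topology

theorem Asymptotics.IsBigO.insert_of_eq_zero {α E F : Type*} [TopologicalSpace α]
    [SeminormedAddCommGroup E] [SeminormedAddCommGroup F] {x : α} {s : Set α} {f : α → E}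
    {g : α → F} (h : f =O[𝓝[s] x] g) (hx : f x = 0) : f =O[𝓝[insert x s] x] g := by
  obtain ⟨C, hC0, hC⟩ := h.exists_nonneg
  exact (hC.insert (by rw [hx, norm_zero]; positivity)).isBigO

theorem Asymptotics.isBigO_of_liminf_ofReal_div_pos {α : Type*} {l : Filter α} {f g : α → ℝ}
    (hg : ∀ᶠ x in l, 0 < g x) (h : 0 < liminf (fun x => ENNReal.ofReal (f x / g x)) l) :
    g =O[l] f := by
  obtain ⟨c, -, hc0, hc⟩ := ENNReal.lt_iff_exists_real_btwn.mp h
  have hc0 : 0 < c := ENNReal.ofReal_pos.mp hc0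
  refine IsBigO.of_bound c⁻¹ ?_
  filter_upwards [hg, eventually_lt_of_lt_liminf hc] with x hgx hx
  have hcf : c * g x < f x := (lt_div_iff₀ hgx).mp (ENNReal.ofReal_lt_ofReal_iff'.mp hx).1
  rw [Real.norm_of_nonneg hgx.le, Real.norm_of_nonneg (by nlinarith), le_inv_mul_iff₀ hc0]
  linarith

theorem rpow_isBigO_nhdsGE_zero_of_liminf_pos {F : ℝ → ℝ} {p : ℝ} (hp : p ≠ 0)
    (h : 0 < liminf (fun s => ENNReal.ofReal (F s / s ^ p)) (𝓝[>] 0)) :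
    (fun s : ℝ => s ^ p) =O[𝓝[≥] 0] F := by
  rw [← Ioi_insert]
  have hpos : ∀ᶠ s : ℝ in 𝓝[>] 0, 0 < s ^ p :=
    eventually_mem_nhdsWithin.mono fun s hs => Real.rpow_pos_of_pos hs p
  exact (isBigO_of_liminf_ofReal_div_pos hpos h).insert_of_eq_zero (Real.zero_rpow hp)

theorem one_sub_isBigO_nhdsLE_one_of_tendsto_div {F : ℝ → ℝ} {k : ℝ} (hk : 0 < k)
    (h : Tendsto (fun s => F s / (1 - s)) (𝓝[<] 1) (𝓝 k)) :
    (fun s : ℝ => 1 - s) =O[𝓝[≤] 1] F := by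
  rw [← Iio_insert]
  have hpos : ∀ᶠ s : ℝ in 𝓝[<] 1, 0 < 1 - s :=
    eventually_mem_nhdsWithin.mono fun s hs => sub_pos.mpr hs
  have hliminf : liminf (fun s => ENNReal.ofReal (F s / (1 - s))) (𝓝[<] 1) = ENNReal.ofReal k :=
    ((ENNReal.continuous_ofReal.tendsto k).comp h).liminf_eq
  refine (isBigO_of_liminf_ofReal_div_pos hpos ?_).insert_of_eq_zero (sub_self 1)
  rwa [hliminf, ENNReal.ofReal_pos]

theorem stmt16_general (p : ℝ) (hp : 1 ≤ p) (F : ℝ → ℝ)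
    (k : ℝ≥0∞) (hk : 0 < k)
    (hliminf : Filter.liminf (fun s => ENNReal.ofReal (F s / s ^ p))
      (nhdsWithin 0 (Set.Ioi 0)) = k)
    (k₁ : ℝ) (hk₁ : 0 < k₁)
    (hlim1 : Filter.Tendsto (fun s => F s / (1 - s))
      (nhdsWithin 1 (Set.Iio 1)) (nhds k₁))
    (u : ℝ → ℝ) (huc : Continuous u)
    (humem : ∀ ξ : ℝ, u ξ ∈ Set.Icc (0:ℝ) 1)
    (hFint : Integrable (fun ξ => F (u ξ)))
    (h0 : Filter.Tendsto u Filter.atTop (nhds 0))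
    (h1 : Filter.Tendsto u Filter.atBot (nhds 1)) :
    IntegrableOn (fun ξ => u ξ ^ p) (Set.Ioi 0) ∧
    IntegrableOn (fun ξ => 1 - u ξ) (Set.Iio 0) := by
  have hp0 : 0 < p := zero_lt_one.trans_le hp
  have hu0 : Tendsto u atTop (𝓝[≥] 0) :=
    tendsto_nhdsWithin_iff.mpr ⟨h0, Eventually.of_forall fun ξ => (humem ξ).1⟩
  have hu1 : Tendsto u atBot (𝓝[≤] 1) :=
    tendsto_nhdsWithin_iff.mpr ⟨h1, Eventually.of_forall fun ξ => (humem ξ).2⟩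
  have hupO : (fun ξ => u ξ ^ p) =O[atTop] fun ξ => F (u ξ) :=
    (rpow_isBigO_nhdsGE_zero_of_liminf_pos hp0.ne' (hliminf ▸ hk)).comp_tendsto hu0
  have hsubO : (fun ξ => 1 - u ξ) =O[atBot] fun ξ => F (u ξ) :=
    (one_sub_isBigO_nhdsLE_one_of_tendsto_div hk₁ hlim1).comp_tendsto hu1
  constructor
  · have hcont : Continuous fun ξ => u ξ ^ p := huc.rpow_const fun _ => Or.inr hp0.le
    exact ((hcont.locallyIntegrable.locallyIntegrableOn _).integrableOn_of_isBigO_atTop hupO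
      (hFint.integrableAtFilter _)).mono_set Ioi_subset_Ici_self
  · have hcont : Continuous fun ξ => 1 - u ξ := continuous_const.sub huc
    exact ((hcont.locallyIntegrable.locallyIntegrableOn _).integrableOn_of_isBigO_atBot hsubO
      (hFint.integrableAtFilter _)).mono_set Iio_subset_Iic_self

/-- Integrability of a traveling-wave profile: if the reaction term `F ≥ 0` is
continuous on `[0,1]` with `liminf_{s→0⁺} F(s)/s^p = k ∈ (0,∞]` and
`lim_{s→1⁻} F(s)/(1-s) = k₁ ∈ (0,∞)`, and if a continuous profile
`u : ℝ → [0,1]` satisfies `∫_ℝ F(u) < ∞`, `u → 0` at `+∞` and `u → 1` at `-∞`,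
then `u^p` is integrable on `(0,∞)` and `1 - u` is integrable on `(-∞,0)`. -/
theorem stmt16 (p : ℝ) (hp : 1 ≤ p) (F : ℝ → ℝ)
    (hFc : ContinuousOn F (Set.Icc 0 1))
    (hFnn : ∀ s ∈ Set.Icc (0:ℝ) 1, 0 ≤ F s)
    (k : ℝ≥0∞) (hk : 0 < k)
    (hliminf : Filter.liminf (fun s => ENNReal.ofReal (F s / s ^ p))
      (nhdsWithin 0 (Set.Ioi 0)) = k)
    (k₁ : ℝ) (hk₁ : 0 < k₁)
    (hlim1 : Filter.Tendsto (fun s => F s / (1 - s))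
      (nhdsWithin 1 (Set.Iio 1)) (nhds k₁))
    (u : ℝ → ℝ) (huc : Continuous u)
    (humem : ∀ ξ : ℝ, u ξ ∈ Set.Icc (0:ℝ) 1)
    (hFint : Integrable (fun ξ => F (u ξ)))
    (h0 : Filter.Tendsto u Filter.atTop (nhds 0))
    (h1 : Filter.Tendsto u Filter.atBot (nhds 1)) :
    IntegrableOn (fun ξ => u ξ ^ p) (Set.Ioi 0) ∧
    IntegrableOn (fun ξ => 1 - u ξ) (Set.Iio 0) :=
  stmt16_general p hp F k hk hliminf k₁ hk₁ hlim1 u huc humem hFint h0 h1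
end

section
/- Let m > 1, ν > 0, c > 0, σ > 0 be real, let K : (0,1) → ℝ be continuous and set F(s) = s·K(s). Let I ⊆ ℝ be an open interval and (u, r) : I → (0,1) × (0,1) a continuously differentiable solution of the planar system (singular). Then u is strictly decreasing, hence a bijection from I onto the open interval u(I), and the function ρ := r ∘ u⁻¹ : u(I) → (0,1) is differentiable and satisfies, for every v ∈ u(I): ρ'(v) = σ/(c·v^m) − m·ρ(v)/v − (K(v)·ν/(c²·v^m))·√(1−ρ(v)²)/ρ(v). -/
lemma alg17 (c ν U R S A Kv σ m : ℝ) (hc : c ≠ 0) (hν : ν ≠ 0) (hU : U ≠ 0)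
    (hR : R ≠ 0) (hS : S ≠ 0) (hA : A ≠ 0) :
    ((U / A) * (R / S) * (m * (A / U) * (c / ν) * R - σ / ν) + (U * Kv) / (c * A)) *
        (-(c / ν) * R * U / S)⁻¹ =
      σ / (c * A) - m * R / U - (Kv * ν / (c ^ 2 * A)) * S / R := by
  field_simp
  ring

/-- Equivalence of the parametric and graph formulations of traveling-wave
orbits: for a `C¹` solution `(u,r)` of the planar system (singular) with
reaction `F(s) = s·K(s)`, the component `u` is strictly decreasing (hence
injective, a bijection onto its image `u(I)`, which is open), and the graph
function `ρ = r ∘ u⁻¹` is differentiable and solves the scalar ODE (u-grafo)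
`ρ'(v) = σ/(c·v^m) - m·ρ(v)/v - (K(v)·ν/(c²·v^m))·√(1-ρ(v)²)/ρ(v)` on `u(I)`. -/
theorem stmt17 (m ν c σ : ℝ) (hm : 1 < m) (hν : 0 < ν) (hc : 0 < c) (hσ : 0 < σ)
    (K : ℝ → ℝ) (hKc : ContinuousOn K (Set.Ioo 0 1))
    (a b : ℝ) (u r u' r' : ℝ → ℝ)
    (humem : ∀ ξ ∈ Set.Ioo a b, u ξ ∈ Set.Ioo (0:ℝ) 1)
    (hrmem : ∀ ξ ∈ Set.Ioo a b, r ξ ∈ Set.Ioo (0:ℝ) 1)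
    (hu : ∀ ξ ∈ Set.Ioo a b, HasDerivAt u (u' ξ) ξ)
    (hr : ∀ ξ ∈ Set.Ioo a b, HasDerivAt r (r' ξ) ξ)
    (hu'c : ContinuousOn u' (Set.Ioo a b)) (hr'c : ContinuousOn r' (Set.Ioo a b))
    (hequ : ∀ ξ ∈ Set.Ioo a b,
      u' ξ = -(c / ν) * r ξ * u ξ / Real.sqrt (1 - (r ξ) ^ 2))
    (heqr : ∀ ξ ∈ Set.Ioo a b,
      r' ξ = (u ξ) ^ (1 - m) * (r ξ / Real.sqrt (1 - (r ξ) ^ 2)) *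
          (m * (u ξ) ^ (m - 1) * (c / ν) * r ξ - σ / ν) +
          (u ξ * K (u ξ)) / (c * (u ξ) ^ m)) :
    StrictAntiOn u (Set.Ioo a b) ∧ Set.InjOn u (Set.Ioo a b) ∧
    IsOpen (u '' Set.Ioo a b) ∧
    ∃ ρ : ℝ → ℝ,
      (∀ ξ ∈ Set.Ioo a b, ρ (u ξ) = r ξ) ∧
      ∀ v ∈ u '' Set.Ioo a b,
        ρ v ∈ Set.Ioo (0:ℝ) 1 ∧
        HasDerivAt ρ
          (σ / (c * v ^ m) - m * ρ v / v -
            (K v * ν / (c ^ 2 * v ^ m)) * Real.sqrt (1 - (ρ v) ^ 2) / ρ v) v := by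
  set I := Set.Ioo a b with hI
  have hIopen : IsOpen I := isOpen_Ioo
  -- positivity of sqrt term
  have hSpos : ∀ ξ ∈ I, 0 < Real.sqrt (1 - (r ξ) ^ 2) := by
    intro ξ hξ
    have h1 := (hrmem ξ hξ).1
    have h2 := (hrmem ξ hξ).2
    have : (r ξ) ^ 2 < 1 := by nlinarith
    exact Real.sqrt_pos.2 (by linarith)
  -- u' is negative on I
  have hu'neg : ∀ ξ ∈ I, u' ξ < 0 := by
    intro ξ hξ
    rw [hequ ξ hξ]
    have hr0 := (hrmem ξ hξ).1
    have hu0 := (humem ξ hξ).1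
    have hS := hSpos ξ hξ
    have h2 : 0 < (c / ν) * r ξ * u ξ / Real.sqrt (1 - (r ξ) ^ 2) := by positivity
    have h3 : -(c / ν) * r ξ * u ξ / Real.sqrt (1 - (r ξ) ^ 2)
        = -((c / ν) * r ξ * u ξ / Real.sqrt (1 - (r ξ) ^ 2)) := by ring
    linarith [h3 ▸ neg_neg_iff_pos.2 h2]
  -- strict anti
  have hanti : StrictAntiOn u I := by
    apply strictAntiOn_of_deriv_neg (convex_Ioo a b)
    · exact fun ξ hξ => (hu ξ hξ).continuousAt.continuousWithinAt
    · intro ξ hξ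
      rw [interior_Ioo] at hξ
      rw [(hu ξ hξ).deriv]
      exact hu'neg ξ hξ
  have hinj : Set.InjOn u I := hanti.injOn
  -- strict differentiability of u at each point of I
  have hstrict : ∀ ξ ∈ I, HasStrictDerivAt u (u' ξ) ξ := by
    intro ξ hξ
    refine hasStrictDerivAt_of_hasDerivAt_of_continuousAt ?_ (hu'c.continuousAt (hIopen.mem_nhds hξ))
    filter_upwards [hIopen.mem_nhds hξ] with y hy using hu y hy
  -- openness of image
  have hopen : IsOpen (u '' I) := by
    rw [isOpen_iff_mem_nhds]
    rintro v ⟨ξ, hξ, rfl⟩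
    have hmap := (hstrict ξ hξ).map_nhds_eq (ne_of_lt (hu'neg ξ hξ))
    rw [← hmap]
    exact Filter.image_mem_map (hIopen.mem_nhds hξ)
  refine ⟨hanti, hinj, hopen, ?_⟩
  -- define ρ
  set ρ : ℝ → ℝ := fun v => r (Function.invFunOn u I v) with hρ
  have hleft : ∀ ξ ∈ I, Function.invFunOn u I (u ξ) = ξ := fun ξ hξ =>
    hinj.leftInvOn_invFunOn hξ
  have hρu : ∀ ξ ∈ I, ρ (u ξ) = r ξ := by
    intro ξ hξ
    simp only [hρ, hleft ξ hξ]
  refine ⟨ρ, hρu, ?_⟩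
  rintro v ⟨ξ, hξ, rfl⟩
  have hρval : ρ (u ξ) = r ξ := hρu ξ hξ
  refine ⟨by rw [hρval]; exact hrmem ξ hξ, ?_⟩
  -- local inverse
  have hu'ne : u' ξ ≠ 0 := ne_of_lt (hu'neg ξ hξ)
  have hst := hstrict ξ hξ
  set g := hst.localInverse u (u' ξ) ξ hu'ne with hg
  have hginv : HasStrictDerivAt g (u' ξ)⁻¹ (u ξ) := hst.to_localInverse hu'ne
  have hgval : g (u ξ) = ξ :=
    (hst.hasStrictFDerivAt_equiv hu'ne).localInverse_apply_image
  -- eventually: u (g w) = w and g w ∈ I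
  have hev1 : ∀ᶠ w in nhds (u ξ), u (g w) = w :=
    (hst.hasStrictFDerivAt_equiv hu'ne).eventually_right_inverse
  have hev2 : ∀ᶠ w in nhds (u ξ), g w ∈ I := by
    have hcont : ContinuousAt g (u ξ) := hginv.hasDerivAt.continuousAt
    have : I ∈ nhds (g (u ξ)) := by rw [hgval]; exact hIopen.mem_nhds hξ
    exact hcont this
  -- eventually ρ = r ∘ g
  have hevEq : (fun w => r (g w)) =ᶠ[nhds (u ξ)] ρ := by
    filter_upwards [hev1, hev2] with w h1 h2
    have : Function.invFunOn u I w = g w := by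
      have hmem : Function.invFunOn u I (u (g w)) = g w := hleft (g w) h2
      rw [h1] at hmem
      exact hmem
    simp only [hρ, this]
  -- derivative of r ∘ g
  have hrg : HasDerivAt (fun w => r (g w)) (r' ξ * (u' ξ)⁻¹) (u ξ) := by
    have hrξ : HasDerivAt r (r' ξ) (g (u ξ)) := by rw [hgval]; exact hr ξ hξ
    exact HasDerivAt.comp (u ξ) hrξ hginv.hasDerivAt
  have hDeriv : HasDerivAt ρ (r' ξ * (u' ξ)⁻¹) (u ξ) := hrg.congr_of_eventuallyEq hevEq.symm
  -- show target value equals r' ξ * (u' ξ)⁻¹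
  have hU0 : (0:ℝ) < u ξ := (humem ξ hξ).1
  have hR0 : (0:ℝ) < r ξ := (hrmem ξ hξ).1
  have hS0 := hSpos ξ hξ
  have hA0 : (0:ℝ) < (u ξ) ^ m := Real.rpow_pos_of_pos hU0 m
  have key : σ / (c * (u ξ) ^ m) - m * ρ (u ξ) / (u ξ) -
      (K (u ξ) * ν / (c ^ 2 * (u ξ) ^ m)) * Real.sqrt (1 - (ρ (u ξ)) ^ 2) / ρ (u ξ)
      = r' ξ * (u' ξ)⁻¹ := by
    rw [hρval, heqr ξ hξ, hequ ξ hξ]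
    have h1m : (u ξ) ^ (1 - m) = u ξ / (u ξ) ^ m := by
      rw [Real.rpow_sub hU0, Real.rpow_one]
    have hm1 : (u ξ) ^ (m - 1) = (u ξ) ^ m / u ξ := by
      rw [Real.rpow_sub hU0, Real.rpow_one]
    rw [h1m, hm1]
    exact (alg17 c ν (u ξ) (r ξ) (Real.sqrt (1 - (r ξ) ^ 2)) ((u ξ) ^ m) (K (u ξ)) σ m
      hc.ne' hν.ne' hU0.ne' hR0.ne' hS0.ne' hA0.ne').symm
  rw [key]
  exact hDeriv
end
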